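/- Let F be a totally real number field, E a totally complex quadratic extension of F (so E is a CM field), and let σ : E → E be the nontrivial F-algebra automorphism of E (complex conjugation). Consider the diagonal embedding of E^× into the unit group of the finite adele ring of E. Then the subgroup G(ℚ) = { x ∈ E^× : x · σ(x) = 1 }, viewed as a subgroup of the units of the finite adele ring of E via this embedding, is discrete, i.e., the subspace topology on it is the discrete topology. -/

import Mathlib

open scoped Multiplicative
open NumberField IsDedekindDomain IsDedekindDomain.HeightOneSpectrum Module

theorem myAux.associates_le_of_count_le {α : Type*} [CommMonoidWithZero α] [IsCancelMulZero α]
    [UniqueFactorizationMonoid α] [DecidableEq (Associates α)] [∀ p : Associates α, Decidable (Irreducible p)] {a b : Associates α} (ha : a ≠ 0) (hb : b ≠ 0)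
    (h : ∀ (p : Associates α) (hp : Irreducible p), p.count a.factors ≤ p.count b.factors) :
    a ≤ b := by
  rw [← Associates.factors_le]
  obtain ⟨sa, h_sa⟩ := Associates.factors_eq_some_iff_ne_zero.mpr ha
  obtain ⟨sb, h_sb⟩ := Associates.factors_eq_some_iff_ne_zero.mpr hb
  rw [h_sa, h_sb] at h ⊢
  rw [WithTop.coe_le_coe]
  rw [Multiset.le_iff_count]
  rintro ⟨p, hp⟩
  have := h p hp
  rwa [Associates.count_some hp, Associates.count_some hp] at this

theorem myAux.exists_algebraMap_eq {R K : Type*} [CommRing R] [IsDedekindDomain R] [Field K]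
    [Algebra R K] [IsFractionRing R K] (x : K)
    (h : ∀ v : HeightOneSpectrum R, v.valuation K x ≤ 1) :
    ∃ r : R, algebraMap R K r = x := by
  classical
  obtain ⟨⟨a, b⟩, hab⟩ := IsLocalization.mk'_surjective (nonZeroDivisors R) x
  have hab : IsLocalization.mk' K a b = x := hab
  have hb0 : (b : R) ≠ 0 := nonZeroDivisors.coe_ne_zero b
  by_cases ha : a = 0
  · exact ⟨0, by rw [map_zero, ← hab, ha, IsLocalization.mk'_zero]⟩
  · have key : ∀ v : HeightOneSpectrum R, v.intValuation a ≤ v.intValuation b := by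
      intro v
      have h1 := h v
      rw [← hab, valuation_of_mk'] at h1
      have h0b : (0 : WithZero (Multiplicative ℤ)) < v.intValuation b := by
        rw [zero_lt_iff, intValuation_apply]
        exact v.intValuation_ne_zero b hb0
      exact (div_le_one₀ h0b).mp h1
    have hcount : ∀ (p : Associates (Ideal R)) (hp : Irreducible p),
        p.count (Associates.mk (Ideal.span {(b : R)})).factors ≤
          p.count (Associates.mk (Ideal.span {a})).factors := by
      intro p hp
      obtain ⟨I, rfl⟩ := Associates.mk_surjective p
      have hI : Irreducible I := (Associates.irreducible_mk).mp hp
      have hIprime : Prime I := UniqueFactorizationMonoid.irreducible_iff_prime.mp hI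
      have hIbot : I ≠ ⊥ := hIprime.ne_zero
      have hIp : I.IsPrime := Ideal.isPrime_of_prime hIprime
      set v : HeightOneSpectrum R := ⟨I, hIp, hIbot⟩
      have := key v
      rw [intValuation_apply, intValuation_apply, intValuationDef_if_neg _ ha,
        intValuationDef_if_neg _ hb0, WithZero.exp_le_exp,
        neg_le_neg_iff, Int.ofNat_le] at this
      exact this
    have hdvd : Ideal.span {(b : R)} ∣ Ideal.span {a} := by
      have h1 : @LE.le (Associates (Ideal R)) Associates.instPreorder.toLE
          (Associates.mk (Ideal.span {(b : R)})) (Associates.mk (Ideal.span {a})) := by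
        refine myAux.associates_le_of_count_le ?_ ?_ hcount
        · rw [Associates.mk_ne_zero]
          simpa using hb0
        · rw [Associates.mk_ne_zero]
          simpa using ha
      exact (Associates.mk_le_mk_iff_dvd).mp h1
    have hmem : a ∈ Ideal.span {(b : R)} := (Ideal.le_of_dvd hdvd) (Ideal.mem_span_singleton_self a)
    obtain ⟨c, hc⟩ := Ideal.mem_span_singleton'.mp hmem
    refine ⟨c, ?_⟩
    have hspec : x * algebraMap R K b = algebraMap R K a := by
      rw [← hab]; exact IsLocalization.mk'_spec K a b
    have hbK : algebraMap R K b ≠ 0 :=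
      IsFractionRing.to_map_ne_zero_of_mem_nonZeroDivisors b.2
    apply mul_right_cancel₀ hbK
    rw [hspec, ← hc, map_mul]

theorem myAux.conj_comm {F E : Type*} [Field F] [Field E]
    [NumberField F] [NumberField E] [Algebra F E]
    (hF : ∀ φ : F →+* ℂ, ∀ x : F, φ x ∈ Set.range ((↑) : ℝ → ℂ))
    (hE : ∀ φ : E →+* ℂ, ¬ ∀ x : E, φ x ∈ Set.range ((↑) : ℝ → ℂ))
    (h2 : Module.finrank F E = 2)
    (σ : E ≃ₐ[F] E) (hσ : σ ≠ AlgEquiv.refl) (φ : E →+* ℂ) (e : E) :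
    φ (σ e) = starRingEnd ℂ (φ e) := by
  haveI : FiniteDimensional F E := FiniteDimensional.of_finrank_pos (by rw [h2]; norm_num)
  haveI : Algebra.IsSeparable F E := Algebra.IsAlgebraic.isSeparable_of_perfectField
  letI : Algebra F ℂ := (φ.comp (algebraMap F E)).toAlgebra
  let φ₁ : E →ₐ[F] ℂ := { toRingHom := φ, commutes' := fun f => rfl }
  let φ₂ : E →ₐ[F] ℂ := φ₁.comp σ.toAlgHom
  let φ₃ : E →ₐ[F] ℂ :=
    { toRingHom := (starRingEnd ℂ).comp φ
      commutes' := fun f => by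
        have : φ (algebraMap F E f) ∈ Set.range ((↑) : ℝ → ℂ) := hF (φ.comp (algebraMap F E)) f
        obtain ⟨r, hr⟩ := this
        show starRingEnd ℂ (φ (algebraMap F E f)) = φ (algebraMap F E f)
        rw [← hr, Complex.conj_ofReal] }
  have hcard : Fintype.card (E →ₐ[F] ℂ) = 2 := by
    rw [AlgHom.card]; exact h2
  have h12 : φ₁ ≠ φ₂ := by
    intro hcontra
    apply hσ
    ext x
    have := congrArg (fun (f : E →ₐ[F] ℂ) => f x) hcontra
    simp only [φ₁, φ₂, AlgHom.comp_apply] at this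
    exact (φ.injective this.symm)
  have h31 : φ₃ ≠ φ₁ := by
    intro hcontra
    apply hE φ
    intro x
    have hx := DFunLike.congr_fun hcontra x
    obtain ⟨r, hr⟩ := Complex.conj_eq_iff_real.mp hx
    exact ⟨r, hr.symm⟩
  classical
  have h32 : φ₃ = φ₂ := by
    by_contra hcontra
    have hcard3 : ({φ₁, φ₂, φ₃} : Finset (E →ₐ[F] ℂ)).card = 3 := by
      rw [Finset.card_insert_of_notMem (by simp [h12, Ne.symm h31]),
        Finset.card_insert_of_notMem (by simp [Ne.symm hcontra]), Finset.card_singleton]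
    have hle := Finset.card_le_univ ({φ₁, φ₂, φ₃} : Finset (E →ₐ[F] ℂ))
    rw [hcard3] at hle
    omega
  exact (DFunLike.congr_fun h32 e).symm

set_option maxHeartbeats 2000000 in
theorem myAux.keyNbhd (F E : Type*) [Field F] [Field E]
    [NumberField F] [NumberField E] [Algebra F E]
    (hF : ∀ φ : F →+* ℂ, ∀ x : F, φ x ∈ Set.range ((↑) : ℝ → ℂ))
    (hE : ∀ φ : E →+* ℂ, ¬ ∀ x : E, φ x ∈ Set.range ((↑) : ℝ → ℂ))
    (h2 : Module.finrank F E = 2)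
    (σ : E ≃ₐ[F] E) (hσ : σ ≠ AlgEquiv.refl) :
    ∃ U : Set (FiniteAdeleRing (𝓞 E) E), IsOpen U ∧ (1 : FiniteAdeleRing (𝓞 E) E) ∈ U ∧
      ∀ e : E, e * σ e = 1 → algebraMap E (FiniteAdeleRing (𝓞 E) E) e ∈ U → e = 1 := by
  classical
  set A := FiniteAdeleRing (𝓞 E) E with hA
  -- the finite set of potential bad points
  set T : Set E := {x : E | IsIntegral ℤ x ∧ ∀ φ : E →+* ℂ, ‖φ x‖ ≤ 1} with hTdef
  have hT : T.Finite := NumberField.Embeddings.finite_of_norm_le E ℂ 1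
  set Tb : Set (𝓞 E) := {t : 𝓞 E | (algebraMap (𝓞 E) E t) ∈ T ∧ t ≠ 1} with hTbdef
  have hTb : Tb.Finite := by
    have hpre : ((algebraMap (𝓞 E) E) ⁻¹' T).Finite :=
      hT.preimage (Set.injOn_of_injective (IsFractionRing.injective (𝓞 E) E))
    exact hpre.subset (fun t ht => ht.1)
  set k : 𝓞 E → ℕ := fun t => Ideal.absNorm (Ideal.span {t - 1}) with hkdef
  set N : ℕ := hTb.toFinset.sup k with hNdef
  set M : ℕ := N + 1 with hMdef
  have hM0 : (M : 𝓞 E) ≠ 0 := Nat.cast_ne_zero.mpr (Nat.succ_ne_zero N)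
  have hMnd : (M : 𝓞 E) ∈ nonZeroDivisors (𝓞 E) := mem_nonZeroDivisors_of_ne_zero hM0
  -- key arithmetic fact : M does not divide t - 1 for bad t
  have hNoDvd : ∀ t : 𝓞 E, t ∈ Tb → ¬ ((M : 𝓞 E) ∣ t - 1) := by
    intro t ht hdvd
    set n : ℕ := Fintype.card (Module.Free.ChooseBasisIndex ℤ (𝓞 E)) with hndef
    have hn : 0 < n := Fintype.card_pos_iff.mpr
      ((Module.Free.chooseBasis ℤ (𝓞 E)).index_nonempty)
    have habs : Ideal.absNorm (Ideal.span {((M : ℕ) : 𝓞 E)}) = M ^ n := by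
      rw [Ideal.absNorm_span_singleton]
      have hcast : ((M : ℕ) : 𝓞 E) = algebraMap ℤ (𝓞 E) ((M : ℕ) : ℤ) := by
        simp
      rw [hcast, Algebra.norm_algebraMap_of_basis (Module.Free.chooseBasis ℤ (𝓞 E))]
      rw [Int.natAbs_pow]
      simp; rfl
    have hd0 : t - 1 ≠ 0 := sub_ne_zero.mpr ht.2
    have hdvd' : Ideal.absNorm (Ideal.span {((M:ℕ) : 𝓞 E)}) ∣
        Ideal.absNorm (Ideal.span {t - 1}) :=
      Ideal.absNorm_dvd_absNorm_of_le (Ideal.span_singleton_le_span_singleton.mpr hdvd)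
    have hne : Ideal.absNorm (Ideal.span {t - 1}) ≠ 0 := by
      rw [Ne, Ideal.absNorm_eq_zero_iff, Ideal.span_singleton_eq_bot]
      exact hd0
    have hle : Ideal.absNorm (Ideal.span {((M:ℕ) : 𝓞 E)}) ≤ Ideal.absNorm (Ideal.span {t - 1}) :=
      Nat.le_of_dvd (Nat.pos_of_ne_zero hne) hdvd'
    have hlt : Ideal.absNorm (Ideal.span {t - 1}) < M := by
      have h1 : k t ≤ N := Finset.le_sup (f := k) (hTb.mem_toFinset.mpr ht)
      have h2 : k t = Ideal.absNorm (Ideal.span {t - 1}) := rfl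
      omega
    have hMn : M ≤ M ^ n := Nat.le_self_pow hn.ne' M
    rw [habs] at hle
    omega
  -- the basic open set
  set W : Set A := {f : A | ∀ v : HeightOneSpectrum (𝓞 E), f.1 v ∈ v.adicCompletionIntegers E}
    with hWdef
  have hWopen : IsOpen W :=
    RestrictedProduct.isOpen_forall_mem (fun v => Valued.isOpen_valuationSubring _)
  have hSopen : IsOpen ((fun y : A => (y - 1) *
      algebraMap E A (algebraMap (𝓞 E) E ((M:ℕ) : 𝓞 E))⁻¹) ⁻¹' W) :=
    hWopen.preimage ((continuous_id.sub continuous_const).mul continuous_const)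
  refine ⟨(fun y : A => (y - 1) *
      algebraMap E A (algebraMap (𝓞 E) E ((M:ℕ) : 𝓞 E))⁻¹) ⁻¹' W, hSopen, ?_, ?_⟩
  · intro v
    simp only [sub_self, zero_mul]
    exact zero_mem _
  · intro e he hU
    by_cases he1 : e = 1
    · exact he1
    exfalso
    set mE : E := algebraMap (𝓞 E) E ((M:ℕ) : 𝓞 E) with hmEdef
    have hmE0 : mE ≠ 0 := by
      intro hcon
      apply hM0
      apply IsFractionRing.injective (𝓞 E) E
      rw [map_zero, ← hmEdef, hcon]
    -- valuation bound
    have hval : ∀ v : HeightOneSpectrum (𝓞 E), v.valuation E (e - 1) ≤ v.valuation E mE := by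
      intro v
      have h1 : (algebraMap E A e - 1) * algebraMap E A mE⁻¹ = algebraMap E A ((e - 1) * mE⁻¹) := by
        rw [map_mul, map_sub, map_one]
      have h2 : (algebraMap E A ((e - 1) * mE⁻¹)).1 v ∈ v.adicCompletionIntegers E := by
        rw [← h1]; exact hU v
      have h3 : v.valuation E ((e - 1) * mE⁻¹) ≤ 1 := by
        rw [← valuedAdicCompletion_eq_valuation']; exact h2
      have hpos : (0 : WithZero (Multiplicative ℤ)) < v.valuation E mE := by
        rw [zero_lt_iff]
        exact (Valuation.ne_zero_iff _).mpr hmE0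
      rw [map_mul, map_inv₀, ← div_eq_mul_inv] at h3
      exact (div_le_one₀ hpos).mp h3
    -- e is integral
    have hval1 : ∀ v : HeightOneSpectrum (𝓞 E), v.valuation E e ≤ 1 := by
      intro v
      have h1 : v.valuation E mE ≤ 1 := v.valuation_le_one _
      have h2' : v.valuation E (e - 1) ≤ 1 := le_trans (hval v) h1
      have := (v.valuation E).map_add (e - 1) 1
      rw [sub_add_cancel] at this
      refine le_trans this ?_
      rw [Valuation.map_one]
      exact max_le h2' le_rfl
    obtain ⟨t, ht⟩ := myAux.exists_algebraMap_eq e hval1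
    have ht1 : t ≠ 1 := fun hcon => he1 (by rw [← ht, hcon, map_one])
    -- e has all conjugates of norm 1
    have hTe : e ∈ T := by
      refine ⟨by rw [← ht]; exact NumberField.RingOfIntegers.isIntegral_coe t, ?_⟩
      intro φ
      have hmul : φ e * φ (σ e) = 1 := by rw [← map_mul, he, map_one]
      have hconj : φ (σ e) = starRingEnd ℂ (φ e) := myAux.conj_comm hF hE h2 σ hσ φ e
      have h1 : ‖φ e‖ * ‖φ (σ e)‖ = 1 := by rw [← norm_mul, hmul, norm_one]
      rw [hconj, RCLike.norm_conj] at h1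
      rcases mul_self_eq_one_iff.mp h1 with h | h
      · exact le_of_eq h
      · exfalso; have := norm_nonneg (φ e); rw [h] at this; linarith
    -- divisibility
    have hvald : ∀ v : HeightOneSpectrum (𝓞 E), v.valuation E ((e - 1) / mE) ≤ 1 := by
      intro v
      rw [map_div₀]
      have hpos : (0 : WithZero (Multiplicative ℤ)) < v.valuation E mE := by
        rw [zero_lt_iff]
        exact (Valuation.ne_zero_iff _).mpr hmE0
      exact (div_le_one₀ hpos).mpr (hval v)
    obtain ⟨s, hs⟩ := myAux.exists_algebraMap_eq _ hvald
    have hts : t - 1 = ((M:ℕ) : 𝓞 E) * s := by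
      apply IsFractionRing.injective (𝓞 E) E
      rw [map_sub, map_one, ht, map_mul, hs]
      rw [← hmEdef, mul_div_cancel₀ _ hmE0]
    exact hNoDvd t ⟨by rw [ht]; exact hTe, ht1⟩ ⟨s, hts⟩

/-- For a CM field `E` with complex conjugation `σ`, the group
`G(ℚ) = {x ∈ E^× : x·σ(x) = 1}`, viewed inside the units of the finite adele ring of `E`
via the diagonal embedding, is discrete. -/
theorem cm_field_norm_one_group_discrete (F E : Type*) [Field F] [Field E]
    [NumberField F] [NumberField E] [Algebra F E]
    (hF : ∀ φ : F →+* ℂ, ∀ x : F, φ x ∈ Set.range ((↑) : ℝ → ℂ))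
    (hE : ∀ φ : E →+* ℂ, ¬ ∀ x : E, φ x ∈ Set.range ((↑) : ℝ → ℂ))
    (h2 : Module.finrank F E = 2)
    (σ : E ≃ₐ[F] E) (hσ : σ ≠ AlgEquiv.refl) :
    DiscreteTopology {x : (FiniteAdeleRing (𝓞 E) E)ˣ //
      ∃ e : E, e * σ e = 1 ∧
        (x : FiniteAdeleRing (𝓞 E) E) = algebraMap E (FiniteAdeleRing (𝓞 E) E) e} := by
  obtain ⟨U, hUopen, hU1, hUkey⟩ := myAux.keyNbhd F E hF hE h2 σ hσ
  rw [discreteTopology_iff_isOpen_singleton]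
  rintro ⟨x₀, e₀, he₀, hx₀⟩
  have he₀ne : e₀ ≠ 0 := by
    intro h
    rw [h, zero_mul] at he₀
    exact zero_ne_one he₀
  have hcont : Continuous (fun y : (FiniteAdeleRing (𝓞 E) E)ˣ =>
      ((x₀⁻¹ * y : (FiniteAdeleRing (𝓞 E) E)ˣ) : FiniteAdeleRing (𝓞 E) E)) :=
    Units.continuous_val.comp (continuous_const.mul continuous_id)
  have hVopen : IsOpen ((fun y : (FiniteAdeleRing (𝓞 E) E)ˣ =>
      ((x₀⁻¹ * y : (FiniteAdeleRing (𝓞 E) E)ˣ) : FiniteAdeleRing (𝓞 E) E)) ⁻¹' U) :=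
    hUopen.preimage hcont
  have hinv : ((x₀⁻¹ : (FiniteAdeleRing (𝓞 E) E)ˣ) : FiniteAdeleRing (𝓞 E) E)
      = algebraMap E (FiniteAdeleRing (𝓞 E) E) e₀⁻¹ := by
    apply Units.inv_eq_of_mul_eq_one_right
    rw [hx₀, ← map_mul, mul_inv_cancel₀ he₀ne, map_one]
  have hset : ({(⟨x₀, e₀, he₀, hx₀⟩ :
      {x : (FiniteAdeleRing (𝓞 E) E)ˣ // ∃ e : E, e * σ e = 1 ∧
        (x : FiniteAdeleRing (𝓞 E) E) = algebraMap E (FiniteAdeleRing (𝓞 E) E) e})} :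
      Set {x : (FiniteAdeleRing (𝓞 E) E)ˣ // ∃ e : E, e * σ e = 1 ∧
        (x : FiniteAdeleRing (𝓞 E) E) = algebraMap E (FiniteAdeleRing (𝓞 E) E) e})
      = Subtype.val ⁻¹' ((fun y : (FiniteAdeleRing (𝓞 E) E)ˣ =>
      ((x₀⁻¹ * y : (FiniteAdeleRing (𝓞 E) E)ˣ) : FiniteAdeleRing (𝓞 E) E)) ⁻¹' U) := by
    ext p
    simp only [Set.mem_singleton_iff, Set.mem_preimage]
    constructor
    · rintro rfl
      simp only [inv_mul_cancel, Units.val_one]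
      exact hU1
    · intro hp
      obtain ⟨e, he, hpe⟩ := p.2
      have he_ne : e ≠ 0 := by
        intro h
        rw [h, zero_mul] at he
        exact zero_ne_one he
      have hσe₀ne : σ e₀ ≠ 0 := by
        intro h
        rw [h, mul_zero] at he₀
        exact zero_ne_one he₀
      have hu : ((x₀⁻¹ * p.1 : (FiniteAdeleRing (𝓞 E) E)ˣ) : FiniteAdeleRing (𝓞 E) E)
          = algebraMap E (FiniteAdeleRing (𝓞 E) E) (e₀⁻¹ * e) := by
        rw [Units.val_mul, hinv, hpe, ← map_mul]
      have he' : (e₀⁻¹ * e) * σ (e₀⁻¹ * e) = 1 := by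
        rw [map_mul, map_inv₀]
        field_simp
        rw [he]
        exact he₀.symm
      have := hUkey (e₀⁻¹ * e) he' (by rw [← hu]; exact hp)
      have hee₀ : e = e₀ := by
        field_simp at this
        exact this
      apply Subtype.ext
      apply Units.ext
      show (p.1 : FiniteAdeleRing (𝓞 E) E) = (x₀ : FiniteAdeleRing (𝓞 E) E)
      rw [hpe, hee₀, ← hx₀]
  rw [hset]
  exact hVopen.preimage continuous_subtype_val
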